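/- Let ζ₁,…,ζₙ be i.i.d. real random variables, S_i the random walk, σ = max{i ≤ n : S_i ≤ 0}. The four random variables N⁺ = Σ_{i=1}^σ 1{S_i ≥ 0}, Ñ⁻ = Σ_{i=0}^{σ−1} 1{S_i ≤ S_σ}, ←F = σ − min{i ≤ σ : S_i = min_{j≤σ} S_j}, and →G = max{i ≤ σ : S_i = max_{j≤σ} S_j} all have the same distribution. -/

import Mathlib

/-!
All four statistics are functions of the increment vector `x ∈ ℝⁿ`, whose law `ν ^ n` is invariant
under permutations of the coordinates. It stays invariant under `x ↦ x ∘ π x` when `π x` is chosen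
among finitely many permutations according to a measurable partition, provided the resulting map
is injective. We use two such maps, both permuting only the first `σ` increments, which keeps the
walk from time `σ` on, and hence `σ` itself, unchanged.

* Reversing the first `σ` increments turns the walk into `i ↦ S_σ - S_{σ - i}`; this exchanges
  `Ñ⁻` with `N⁺` and `←F` with `→G`.
* Feller's rearrangement moves the increments `ζ_i` with `S_i ≥ 0`, `1 ≤ i ≤ σ`, in reverse order
  to the front and keeps the others in order behind them. By induction on `σ`, the new walk attains
  its maximum over `[0, σ]` for the last time at `N⁺`. The map is injective because the sign of
  `S_σ`, read off the total sum, tells whether the last increment was moved to the front or kept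
  at the end.
-/

open MeasureTheory ProbabilityTheory Finset

namespace RandomWalk

open Equiv

def partialSum (z : ℕ → ℝ) (i : ℕ) : ℝ := ∑ j ∈ range i, z j

@[simp] lemma partialSum_zero (z : ℕ → ℝ) : partialSum z 0 = 0 := by simp [partialSum]

lemma partialSum_succ (z : ℕ → ℝ) (i : ℕ) : partialSum z (i + 1) = partialSum z i + z i :=
  sum_range_succ z i

lemma partialSum_comp_perm {z : ℕ → ℝ} {e : Perm ℕ} {m r : ℕ} (he : ∀ j, m ≤ j → e j = j)
    (hr : m ≤ r) : partialSum (z ∘ e) r = partialSum z r :=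
  e.sum_comp (range r) z fun j hj => mem_range.2 (by by_contra h; exact hj (he j (by omega)))

lemma apply_lt_iff_lt_of_fixes {e : Perm ℕ} {m n : ℕ} (he : ∀ j, m ≤ j → e j = j) (hmn : m ≤ n)
    (j : ℕ) : e j < n ↔ j < n := by
  by_cases hj : m ≤ j
  · rw [he j hj]
  · have : e j < m := by
      by_contra h
      exact hj (e.injective (he _ (not_lt.1 h)) ▸ not_lt.1 h)
    omega

def prefixRev (m : ℕ) : Perm ℕ := (Fin.revPerm : Perm (Fin m)).extendDomain Fin.equivSubtype

lemma prefixRev_of_lt {m j : ℕ} (h : j < m) : prefixRev m j = m - 1 - j := by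
  rw [prefixRev, Perm.extendDomain_apply_subtype _ Fin.equivSubtype h]
  simp [Fin.equivSubtype]
  omega

lemma prefixRev_of_le {m j : ℕ} (h : m ≤ j) : prefixRev m j = j :=
  Perm.extendDomain_apply_not_subtype _ Fin.equivSubtype (by omega)

def prefixRot (m : ℕ) : Perm ℕ := (finRotate (m + 1))⁻¹.extendDomain Fin.equivSubtype

lemma prefixRot_zero (m : ℕ) : prefixRot m 0 = m := by
  rw [prefixRot, Perm.extendDomain_apply_subtype _ Fin.equivSubtype (by omega : 0 < m + 1)]
  simp [Fin.equivSubtype]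

lemma prefixRot_succ {m j : ℕ} (h : j < m) : prefixRot m (j + 1) = j := by
  rw [prefixRot, Perm.extendDomain_apply_subtype _ Fin.equivSubtype (by omega : j + 1 < m + 1)]
  have : (finRotate (m + 1))⁻¹ ⟨j + 1, by omega⟩ = ⟨j, by omega⟩ := by
    rw [Perm.inv_eq_iff_eq, finRotate_of_lt h]
  simp [Fin.equivSubtype, this]

lemma prefixRot_of_lt {m j : ℕ} (h : m < j) : prefixRot m j = j :=
  Perm.extendDomain_apply_not_subtype _ Fin.equivSubtype (by omega)

lemma partialSum_comp_prefixRev (z : ℕ → ℝ) {m i : ℕ} (hi : i ≤ m) :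
    partialSum (z ∘ prefixRev m) i = partialSum z m - partialSum z (m - i) := by
  induction i with
  | zero => simp
  | succ i ih =>
    have hsplit : partialSum z (m - i) = partialSum z (m - (i + 1)) + z (m - 1 - i) := by
      have : m - i = m - (i + 1) + 1 := by omega
      rw [this, partialSum_succ]; congr 2; omega
    rw [partialSum_succ, ih (by omega), Function.comp_apply, prefixRev_of_lt (by omega), hsplit]
    ring

lemma partialSum_comp_prefixRot_succ (y : ℕ → ℝ) {m r : ℕ} (hr : r ≤ m) :
    partialSum (y ∘ prefixRot m) (r + 1) = y m + partialSum y r := by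
  rw [partialSum, sum_range_succ', Function.comp_apply, prefixRot_zero, add_comm]
  congr 1
  exact sum_congr rfl fun j hj => by
    rw [Function.comp_apply, prefixRot_succ (by simp at hj; omega)]

/- Read as a list `j ↦ mergePerm p m j` of the indices `j < m`: first those with `p (j + 1)`, in
decreasing order, then the others, in increasing order. Each step either rotates the new index `m`
to the front or leaves it at the end. -/
def mergePerm (p : ℕ → Prop) [DecidablePred p] : ℕ → Perm ℕ
  | 0 => 1
  | m + 1 => if p (m + 1) then mergePerm p m * prefixRot m else mergePerm p m

section MergePerm

variable {p : ℕ → Prop} [DecidablePred p]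

lemma mergePerm_of_le {m j : ℕ} (h : m ≤ j) : mergePerm p m j = j := by
  induction m generalizing j with
  | zero => rfl
  | succ m ih =>
    rw [mergePerm]
    split_ifs
    · rw [Perm.mul_apply, prefixRot_of_lt (by omega), ih (by omega)]
    · exact ih (by omega)

lemma partialSum_comp_mergePerm_of_le (z : ℕ → ℝ) {m r : ℕ} (hr : m ≤ r) :
    partialSum (z ∘ mergePerm p m) r = partialSum z r :=
  partialSum_comp_perm (fun _ => mergePerm_of_le) hr

lemma mergePerm_congr {q : ℕ → Prop} [DecidablePred q] {m : ℕ}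
    (h : ∀ i, 1 ≤ i → i ≤ m → (p i ↔ q i)) : mergePerm p m = mergePerm q m := by
  induction m with
  | zero => rfl
  | succ m ih =>
    rw [mergePerm, mergePerm, ih fun i h1 h2 => h i h1 (by omega),
      if_congr (h _ (by omega) le_rfl) rfl rfl]

end MergePerm

section Statistics

variable (n m : ℕ) (s : ℕ → ℝ)

noncomputable def lastNonpos : ℕ := sSup {i | i ≤ n ∧ s i ≤ 0}

noncomputable def nonnegCount : ℕ := ∑ i ∈ Icc 1 m, if 0 ≤ s i then 1 else 0

noncomputable def leFinalCount : ℕ := ∑ i ∈ range m, if s i ≤ s m then 1 else 0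

noncomputable def firstArgmin : ℕ := sInf {i | i ≤ m ∧ s i = sInf (s '' Set.Iic m)}

noncomputable def lastArgmax : ℕ := sSup {i | i ≤ m ∧ s i = sSup (s '' Set.Iic m)}

variable {n m s}

lemma isGreatest_lastNonpos (hs : s 0 ≤ 0) :
    IsGreatest {i | i ≤ n ∧ s i ≤ 0} (lastNonpos n s) :=
  ⟨Nat.sSup_mem ⟨0, Nat.zero_le n, hs⟩ ⟨n, fun _ hi => hi.1⟩,
    fun _ hi => le_csSup ⟨n, fun _ hi => hi.1⟩ hi⟩

lemma lastNonpos_le (hs : s 0 ≤ 0) : lastNonpos n s ≤ n := (isGreatest_lastNonpos hs).1.1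

lemma lastNonpos_eq_of_eqOn {t : ℕ → ℝ} (hs : s 0 ≤ 0) (ht : ∀ i, m ≤ i → i ≤ n → t i = s i)
    (hm : lastNonpos n s = m) : lastNonpos n t = m := by
  obtain ⟨⟨hmn, hsm⟩, hmax⟩ := hm ▸ isGreatest_lastNonpos (n := n) hs
  refine IsGreatest.csSup_eq ⟨⟨hmn, (ht m le_rfl hmn).symm ▸ hsm⟩, fun i ⟨hin, hti⟩ => ?_⟩
  by_contra! hmi
  exact (hmax ⟨hin, ht i hmi.le hin ▸ hti⟩).not_gt hmi

lemma nonnegCount_succ :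
    nonnegCount (m + 1) s = nonnegCount m s + if 0 ≤ s (m + 1) then 1 else 0 :=
  sum_Icc_succ_top (by omega) _

lemma setOf_eq_sSup_image :
    {i | i ≤ m ∧ s i = sSup (s '' Set.Iic m)} = {i | i ≤ m ∧ ∀ j ≤ m, s j ≤ s i} := by
  have hbdd : BddAbove (s '' Set.Iic m) := ((Set.finite_Iic m).image s).bddAbove
  ext i
  refine and_congr_right fun hi => ⟨fun h j hj => h ▸ le_csSup hbdd ⟨j, hj, rfl⟩, fun h => ?_⟩
  exact le_antisymm (le_csSup hbdd ⟨i, hi, rfl⟩)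
    (csSup_le ⟨s 0, 0, Nat.zero_le m, rfl⟩ (by rintro _ ⟨j, hj, rfl⟩; exact h j hj))

lemma setOf_eq_sInf_image :
    {i | i ≤ m ∧ s i = sInf (s '' Set.Iic m)} = {i | i ≤ m ∧ ∀ j ≤ m, s i ≤ s j} := by
  have hbdd : BddBelow (s '' Set.Iic m) := ((Set.finite_Iic m).image s).bddBelow
  ext i
  refine and_congr_right fun hi => ⟨fun h j hj => h ▸ csInf_le hbdd ⟨j, hj, rfl⟩, fun h => ?_⟩
  exact le_antisymm (le_csInf ⟨s 0, 0, Nat.zero_le m, rfl⟩ (by rintro _ ⟨j, hj, rfl⟩; exact h j hj))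
    (csInf_le hbdd ⟨i, hi, rfl⟩)

lemma lastArgmax_eq_sSup : lastArgmax m s = sSup {i | i ≤ m ∧ ∀ j ≤ m, s j ≤ s i} := by
  rw [lastArgmax, setOf_eq_sSup_image]

lemma firstArgmin_eq_sInf : firstArgmin m s = sInf {i | i ≤ m ∧ ∀ j ≤ m, s i ≤ s j} := by
  rw [firstArgmin, setOf_eq_sInf_image]

def IsLastArgmax (m : ℕ) (s : ℕ → ℝ) (k : ℕ) : Prop :=
  k ≤ m ∧ (∀ j ≤ k, s j ≤ s k) ∧ ∀ j, k < j → j ≤ m → s j < s k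

lemma IsLastArgmax.lastArgmax_eq {k : ℕ} (h : IsLastArgmax m s k) : lastArgmax m s = k := by
  obtain ⟨hkm, hle, hlt⟩ := h
  rw [lastArgmax_eq_sSup]
  refine IsGreatest.csSup_eq ⟨⟨hkm, fun j hj => ?_⟩, fun i ⟨him, hi⟩ => ?_⟩
  · rcases le_or_gt j k with hjk | hjk
    exacts [hle j hjk, (hlt j hjk hj).le]
  · by_contra! hki
    exact (hlt i hki him).not_ge (hi k hkm)

lemma firstArgmin_spec :
    firstArgmin m s ≤ m ∧ (∀ j ≤ m, s (firstArgmin m s) ≤ s j) ∧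
      ∀ j < firstArgmin m s, s (firstArgmin m s) < s j := by
  obtain ⟨i, hi, hmin⟩ := exists_min_image (range (m + 1)) s nonempty_range_add_one
  have hne : {i | i ≤ m ∧ ∀ j ≤ m, s i ≤ s j}.Nonempty :=
    ⟨i, by simpa [Nat.lt_succ_iff] using hi, fun j hj => hmin j (by simpa [Nat.lt_succ_iff])⟩
  rw [firstArgmin_eq_sInf]
  obtain ⟨ham, hmin⟩ := Nat.sInf_mem hne
  refine ⟨ham, hmin, fun j hj => ?_⟩
  by_contra! hja
  exact Nat.notMem_of_lt_sInf hj ⟨by omega, fun l hl => hja.trans (hmin l hl)⟩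

end Statistics

section Reflection

variable {m : ℕ} {s t : ℕ → ℝ}

lemma leFinalCount_eq_nonnegCount (ht : ∀ i ≤ m, t i = s m - s (m - i)) :
    leFinalCount m s = nonnegCount m t := by
  refine sum_nbij' (fun j => m - j) (fun i => m - i) (fun j hj => ?_) (fun i hi => ?_)
    (fun j hj => ?_) (fun i hi => ?_) (fun j hj => ?_) <;> simp only [mem_range, mem_Icc] at *
  · omega
  · omega
  · omega
  · omega
  · simp only [ht _ (Nat.sub_le m j), Nat.sub_sub_self hj.le, sub_nonneg]

lemma sub_firstArgmin_eq_lastArgmax (ht : ∀ i ≤ m, t i = s m - s (m - i)) :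
    m - firstArgmin m s = lastArgmax m t := by
  obtain ⟨ham, hmin, hlt⟩ := firstArgmin_spec (m := m) (s := s)
  have hta : t (m - firstArgmin m s) = s m - s (firstArgmin m s) := by
    rw [ht _ (Nat.sub_le _ _), Nat.sub_sub_self ham]
  refine (IsLastArgmax.lastArgmax_eq ⟨Nat.sub_le _ _, fun j hj => ?_, fun j hj hjm => ?_⟩).symm
  · rw [hta, ht j (by omega)]
    linarith [hmin (m - j) (Nat.sub_le _ _)]
  · rw [hta, ht j hjm]
    linarith [hlt (m - j) (by omega)]

end Reflection

section Merge

variable {m k : ℕ}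

lemma IsLastArgmax.succ_of_neg {s : ℕ → ℝ} (h : IsLastArgmax m s k) (hs : s 0 = 0)
    (hneg : s (m + 1) < 0) : IsLastArgmax (m + 1) s k := by
  obtain ⟨hkm, hle, hlt⟩ := h
  refine ⟨by omega, hle, fun j hj hjm => ?_⟩
  rcases Nat.lt_or_ge j (m + 1) with hjm' | hjm'
  · exact hlt j hj (by omega)
  · rw [show j = m + 1 by omega]
    linarith [hle 0 (Nat.zero_le k)]

lemma IsLastArgmax.comp_prefixRot {y : ℕ → ℝ} (h : IsLastArgmax m (partialSum y) k)
    (hnonneg : 0 ≤ partialSum y (m + 1)) :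
    IsLastArgmax (m + 1) (partialSum (y ∘ prefixRot m)) (k + 1) := by
  obtain ⟨hkm, hle, hlt⟩ := h
  have hstep (r : ℕ) (hr : r ≤ m) := partialSum_comp_prefixRot_succ y hr
  have hmk : partialSum y m ≤ partialSum y k := by
    rcases hkm.eq_or_lt with hk | hk
    exacts [hle m hk.ge, (hlt m hk le_rfl).le]
  have hsucc := partialSum_succ y m
  refine ⟨by omega, fun j hj => ?_, fun j hj hjm => ?_⟩
  · rw [hstep k hkm]
    rcases j with _ | j
    · rw [partialSum_zero]
      linarith
    · rw [hstep j (by omega)]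
      linarith [hle j (by omega)]
  · obtain ⟨j, rfl⟩ : ∃ i, j = i + 1 := ⟨j - 1, by omega⟩
    rw [hstep k hkm, hstep j (by omega)]
    linarith [hlt j (by omega) (by omega)]

theorem isLastArgmax_mergePerm (z : ℕ → ℝ) (m : ℕ) :
    IsLastArgmax m (partialSum (z ∘ mergePerm (fun i => 0 ≤ partialSum z i) m))
      (nonnegCount m (partialSum z)) := by
  induction m with
  | zero => exact ⟨le_rfl, fun j hj => by simp_all [nonnegCount], fun j _ _ => by omega⟩
  | succ m ih =>
    have hsum := partialSum_comp_mergePerm_of_le (p := fun i => 0 ≤ partialSum z i) z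
      (Nat.le_succ m)
    rw [nonnegCount_succ, mergePerm]
    by_cases hp : 0 ≤ partialSum z (m + 1)
    · rw [if_pos hp, if_pos hp, Perm.coe_mul, ← Function.comp_assoc]
      exact ih.comp_prefixRot (hsum ▸ hp)
    · rw [if_neg hp, if_neg hp, add_zero]
      exact ih.succ_of_neg (partialSum_zero _) (hsum ▸ not_le.1 hp)

lemma eq_of_comp_mergePerm_eq {z z' : ℕ → ℝ} {m : ℕ}
    (h : z ∘ mergePerm (fun i => 0 ≤ partialSum z i) m =
      z' ∘ mergePerm (fun i => 0 ≤ partialSum z' i) m) :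
    ∀ j < m, z j = z' j := by
  induction m with
  | zero => intro j hj; omega
  | succ m ih =>
    have hsum : partialSum z (m + 1) = partialSum z' (m + 1) := by
      rw [← partialSum_comp_mergePerm_of_le (p := fun i => 0 ≤ partialSum z i) z le_rfl, h,
        partialSum_comp_mergePerm_of_le z' le_rfl]
    have hm : z ∘ mergePerm (fun i => 0 ≤ partialSum z i) m =
        z' ∘ mergePerm (fun i => 0 ≤ partialSum z' i) m := by
      rw [mergePerm, mergePerm] at h
      by_cases hp : 0 ≤ partialSum z (m + 1)
      · rw [if_pos hp, if_pos (hsum ▸ hp), Perm.coe_mul, Perm.coe_mul, ← Function.comp_assoc,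
          ← Function.comp_assoc] at h
        exact (prefixRot m).surjective.injective_comp_right h
      · rwa [if_neg hp, if_neg (hsum ▸ hp)] at h
    intro j hj
    rcases Nat.lt_or_ge j m with hjm | hjm
    · exact ih hm j hjm
    · obtain rfl : j = m := by omega
      simpa only [Function.comp_apply, mergePerm_of_le le_rfl] using congrFun hm j

end Merge

section Congruence

def SameOrder (n : ℕ) (s t : ℕ → ℝ) : Prop := ∀ i ≤ n, ∀ j ≤ n, (s i ≤ s j ↔ t i ≤ t j)

variable {n m : ℕ} {s t : ℕ → ℝ}

lemma SameOrder.mono (h : SameOrder n s t) (hm : m ≤ n) : SameOrder m s t :=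
  fun i hi j hj => h i (hi.trans hm) j (hj.trans hm)

lemma SameOrder.of_eqOn (h : ∀ i ≤ n, s i = t i) : SameOrder n s t :=
  fun i hi j hj => by rw [h i hi, h j hj]

lemma lastNonpos_congr (h : SameOrder n s t) (hs : s 0 = 0) (ht : t 0 = 0) :
    lastNonpos n s = lastNonpos n t := by
  unfold lastNonpos
  congr 1
  ext i
  exact and_congr_right fun hi => by simpa only [hs, ht] using h i hi 0 (Nat.zero_le n)

lemma nonnegCount_congr (h : SameOrder m s t) (hs : s 0 = 0) (ht : t 0 = 0) :
    nonnegCount m s = nonnegCount m t :=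
  sum_congr rfl fun i hi => if_congr
    (by simpa only [hs, ht] using h 0 (Nat.zero_le m) i (mem_Icc.1 hi).2) rfl rfl

lemma leFinalCount_congr (h : SameOrder m s t) : leFinalCount m s = leFinalCount m t :=
  sum_congr rfl fun i hi => if_congr (h i (mem_range.1 hi).le m le_rfl) rfl rfl

lemma lastArgmax_congr (h : SameOrder m s t) : lastArgmax m s = lastArgmax m t := by
  simp only [lastArgmax_eq_sSup]
  congr 1
  ext i
  exact and_congr_right fun hi => forall₂_congr fun j hj => h j hj i hi

lemma firstArgmin_congr (h : SameOrder m s t) : firstArgmin m s = firstArgmin m t := by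
  simp only [firstArgmin_eq_sInf]
  congr 1
  ext i
  exact and_congr_right fun hi => forall₂_congr fun j hj => h i hi j hj

end Congruence

section WalkStatistics

variable (n : ℕ) (s : ℕ → ℝ)

/- The paper's `N⁺`, `Ñ⁻`, `←F` and `→G` of the walk `s`, with `σ = lastNonpos n s`. -/

noncomputable def nPlus : ℕ := nonnegCount (lastNonpos n s) s

noncomputable def nTildeMinus : ℕ := leFinalCount (lastNonpos n s) s

noncomputable def timeSinceMin : ℕ := lastNonpos n s - firstArgmin (lastNonpos n s) s

noncomputable def timeOfMax : ℕ := lastArgmax (lastNonpos n s) s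

variable {n s} {t : ℕ → ℝ}

lemma nPlus_congr (h : SameOrder n s t) (hs : s 0 = 0) (ht : t 0 = 0) : nPlus n s = nPlus n t := by
  rw [nPlus, nPlus, lastNonpos_congr h hs ht]
  exact nonnegCount_congr (h.mono (lastNonpos_le ht.le)) hs ht

lemma nTildeMinus_congr (h : SameOrder n s t) (hs : s 0 = 0) (ht : t 0 = 0) :
    nTildeMinus n s = nTildeMinus n t := by
  rw [nTildeMinus, nTildeMinus, lastNonpos_congr h hs ht]
  exact leFinalCount_congr (h.mono (lastNonpos_le ht.le))

lemma timeSinceMin_congr (h : SameOrder n s t) (hs : s 0 = 0) (ht : t 0 = 0) :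
    timeSinceMin n s = timeSinceMin n t := by
  rw [timeSinceMin, timeSinceMin, lastNonpos_congr h hs ht,
    firstArgmin_congr (h.mono (lastNonpos_le ht.le))]

lemma timeOfMax_congr (h : SameOrder n s t) (hs : s 0 = 0) (ht : t 0 = 0) :
    timeOfMax n s = timeOfMax n t := by
  rw [timeOfMax, timeOfMax, lastNonpos_congr h hs ht]
  exact lastArgmax_congr (h.mono (lastNonpos_le ht.le))

end WalkStatistics

section Vectors

variable {n : ℕ}

def extendByZero (x : Fin n → ℝ) (j : ℕ) : ℝ := if h : j < n then x ⟨j, h⟩ else 0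

def walk (x : Fin n → ℝ) : ℕ → ℝ := partialSum (extendByZero x)

@[simp] lemma walk_zero (x : Fin n → ℝ) : walk x 0 = 0 := partialSum_zero _

lemma extendByZero_injective : Function.Injective (extendByZero (n := n)) := fun x y h =>
  funext fun j => by simpa [extendByZero] using congrFun h j

lemma measurable_walk (i : ℕ) : Measurable fun x : Fin n → ℝ => walk x i := by
  simp only [walk, partialSum, extendByZero]
  refine Finset.measurable_sum _ fun j _ => ?_
  split_ifs
  exacts [measurable_pi_apply _, measurable_const]

def finPerm (e : Perm ℕ) (he : ∀ j, e j < n ↔ j < n) : Perm (Fin n) :=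
  Fin.equivSubtype.symm.permCongr (e.subtypePerm he)

@[simp] lemma coe_finPerm_apply (e : Perm ℕ) (he : ∀ j, e j < n ↔ j < n) (j : Fin n) :
    (finPerm e he j : ℕ) = e j := rfl

lemma extendByZero_comp_finPerm (x : Fin n → ℝ) (e : Perm ℕ) (he : ∀ j, e j < n ↔ j < n) :
    extendByZero (x ∘ finPerm e he) = extendByZero x ∘ e := by
  funext j
  by_cases hj : j < n
  · simp [extendByZero, hj, (he j).2 hj]
    rfl
  · simp [extendByZero, hj, (he j).not.2 hj]

end Vectors

/-- `f` factors through the finitely many order patterns of `walk x 0, …, walk x n`. -/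
lemma measurableSet_preimage_of_sameOrder {n : ℕ} {β : Type*} {f : (Fin n → ℝ) → β}
    (hf : ∀ x y, SameOrder n (walk x) (walk y) → f x = f y) (B : Set β) :
    MeasurableSet (f ⁻¹' B) := by
  let pattern (x : Fin n → ℝ) : Fin (n + 1) → Fin (n + 1) → Prop := fun i j => walk x i ≤ walk x j
  have hpattern : Measurable pattern := measurable_pi_lambda _ fun i => measurable_pi_lambda _
    fun j => measurableSet_setOfPred.1 (measurableSet_le (measurable_walk i) (measurable_walk j))
  have hfactor : f ⁻¹' B = pattern ⁻¹' (pattern '' (f ⁻¹' B)) := by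
    refine (Set.subset_preimage_image _ _).antisymm ?_
    rintro x ⟨y, hy, hyx⟩
    have hxy : f x = f y := hf x y fun i hi j hj =>
      (congrFun (congrFun hyx ⟨i, by omega⟩) ⟨j, by omega⟩).to_iff.symm
    rwa [Set.mem_preimage, hxy]
  rw [hfactor]
  exact hpattern (Set.to_countable _).measurableSet

section MeasurePreserving

variable {α κ : Type*} [MeasurableSpace α] [Countable κ] {γ : Measure α}

/-- Injectivity makes the images of the cells disjoint, so `Φ` preserves the measure of images of
measurable sets; in particular its range is conull. -/
theorem measurePreserving_of_injective_piecewise [IsFiniteMeasure γ] (T : κ → α ≃ᵐ α)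
    (hT : ∀ k, MeasurePreserving (T k) γ γ) (c : α → κ) (hc : ∀ k, MeasurableSet (c ⁻¹' {k}))
    (hinj : Function.Injective fun x => T (c x) x) :
    MeasurePreserving (fun x => T (c x) x) γ γ := by
  set Φ := fun x => T (c x) x
  have hcell (E : Set α) (k : κ) : Φ '' (c ⁻¹' {k} ∩ E) = T k '' (c ⁻¹' {k} ∩ E) :=
    Set.image_congr fun x hx => by simp only [Φ, show c x = k from hx.1]
  have hdisj : Pairwise (Function.onFun Disjoint fun k => c ⁻¹' {k}) :=
    fun k l hkl => Set.disjoint_left.2 fun x hk hl => hkl (hk.symm.trans hl)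
  have himage (E : Set α) (hE : MeasurableSet E) : MeasurableSet (Φ '' E) ∧ γ (Φ '' E) = γ E := by
    have hE' : E = ⋃ k, c ⁻¹' {k} ∩ E := by ext x; simp
    have hmeas (k : κ) : MeasurableSet (Φ '' (c ⁻¹' {k} ∩ E)) := by
      rw [hcell, ← (T k).preimage_symm]
      exact (T k).symm.measurable ((hc k).inter hE)
    rw [hE', Set.image_iUnion]
    refine ⟨.iUnion hmeas, ?_⟩
    rw [measure_iUnion (fun k l hkl => (hdisj hkl).mono Set.inter_subset_left Set.inter_subset_left
      |>.image hinj.injOn (Set.subset_univ _) (Set.subset_univ _)) hmeas,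
      measure_iUnion (fun k l hkl => (hdisj hkl).mono Set.inter_subset_left Set.inter_subset_left)
        fun k => (hc k).inter hE]
    refine tsum_congr fun k => ?_
    rw [hcell, ← (T k).preimage_symm, ((hT k).symm (T k)).measure_preimage_equiv]
  have hΦ : Measurable Φ := fun B hB => by
    have : Φ ⁻¹' B = ⋃ k, c ⁻¹' {k} ∩ T k ⁻¹' B := by ext x; simp [Φ]
    rw [this]
    exact .iUnion fun k => (hc k).inter ((T k).measurable hB)
  obtain ⟨hrange, hγrange⟩ := himage Set.univ .univ
  have hconull : γ (Set.range Φ)ᶜ = 0 := by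
    rw [measure_compl (Set.image_univ ▸ hrange) (measure_ne_top _ _), ← Set.image_univ, hγrange,
      tsub_self]
  refine ⟨hΦ, Measure.ext fun B hB => ?_⟩
  rw [Measure.map_apply hΦ hB, ← (himage _ (hΦ hB)).2, Set.image_preimage_eq_inter_range,
    measure_inter_conull hconull]

end MeasurePreserving

theorem measurePreserving_comp_perm {ι β : Type*} [Fintype ι] [MeasurableSpace β]
    (ν : Measure β) [IsFiniteMeasure ν] (π : (ι → β) → Perm ι)
    (hπ : ∀ p, MeasurableSet {x | π x = p}) (hinj : Function.Injective fun x => x ∘ π x) :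
    MeasurePreserving (fun x => x ∘ π x) (Measure.pi fun _ => ν) (Measure.pi fun _ => ν) := by
  have hT (p : Perm ι) : MeasurePreserving (MeasurableEquiv.arrowCongr' p.symm (.refl β))
      (Measure.pi fun _ => ν) (Measure.pi fun _ => ν) :=
    measurePreserving_arrowCongr' _ _ _ _ fun _ => .id ν
  exact measurePreserving_of_injective_piecewise _ hT π hπ hinj

section Rearrangements

variable {n : ℕ}

lemma lastNonpos_walk_le (x : Fin n → ℝ) : lastNonpos n (walk x) ≤ n :=
  lastNonpos_le (walk_zero x).le

noncomputable def reflectFinPerm (x : Fin n → ℝ) : Perm (Fin n) :=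
  finPerm (prefixRev (lastNonpos n (walk x)))
    (apply_lt_iff_lt_of_fixes (fun _ => prefixRev_of_le) (lastNonpos_walk_le x))

noncomputable def mergeFinPerm (x : Fin n → ℝ) : Perm (Fin n) :=
  finPerm (mergePerm (fun i => 0 ≤ walk x i) (lastNonpos n (walk x)))
    (apply_lt_iff_lt_of_fixes (fun _ => mergePerm_of_le) (lastNonpos_walk_le x))

lemma walk_comp_reflectFinPerm (x : Fin n → ℝ) :
    walk (x ∘ reflectFinPerm x) =
      partialSum (extendByZero x ∘ prefixRev (lastNonpos n (walk x))) :=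
  congrArg partialSum (extendByZero_comp_finPerm _ _ _)

lemma walk_comp_mergeFinPerm (x : Fin n → ℝ) :
    walk (x ∘ mergeFinPerm x) = partialSum
      (extendByZero x ∘ mergePerm (fun i => 0 ≤ walk x i) (lastNonpos n (walk x))) :=
  congrArg partialSum (extendByZero_comp_finPerm _ _ _)

lemma lastNonpos_walk_comp_reflectFinPerm (x : Fin n → ℝ) :
    lastNonpos n (walk (x ∘ reflectFinPerm x)) = lastNonpos n (walk x) :=
  lastNonpos_eq_of_eqOn (walk_zero x).le (fun _ hi _ => by
    rw [walk_comp_reflectFinPerm]; exact partialSum_comp_perm (fun _ => prefixRev_of_le) hi) rfl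

lemma lastNonpos_walk_comp_mergeFinPerm (x : Fin n → ℝ) :
    lastNonpos n (walk (x ∘ mergeFinPerm x)) = lastNonpos n (walk x) :=
  lastNonpos_eq_of_eqOn (walk_zero x).le (fun _ hi _ => by
    rw [walk_comp_mergeFinPerm]; exact partialSum_comp_mergePerm_of_le _ hi) rfl

lemma nTildeMinus_eq_nPlus_reflectFinPerm (x : Fin n → ℝ) :
    nTildeMinus n (walk x) = nPlus n (walk (x ∘ reflectFinPerm x)) := by
  rw [nTildeMinus, nPlus, lastNonpos_walk_comp_reflectFinPerm, walk_comp_reflectFinPerm]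
  exact leFinalCount_eq_nonnegCount fun _ hi => partialSum_comp_prefixRev _ hi

lemma timeSinceMin_eq_timeOfMax_reflectFinPerm (x : Fin n → ℝ) :
    timeSinceMin n (walk x) = timeOfMax n (walk (x ∘ reflectFinPerm x)) := by
  rw [timeSinceMin, timeOfMax, lastNonpos_walk_comp_reflectFinPerm, walk_comp_reflectFinPerm]
  exact sub_firstArgmin_eq_lastArgmax fun _ hi => partialSum_comp_prefixRev _ hi

lemma nPlus_eq_timeOfMax_mergeFinPerm (x : Fin n → ℝ) :
    nPlus n (walk x) = timeOfMax n (walk (x ∘ mergeFinPerm x)) := by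
  rw [nPlus, timeOfMax, lastNonpos_walk_comp_mergeFinPerm, walk_comp_mergeFinPerm]
  exact (isLastArgmax_mergePerm _ _).lastArgmax_eq.symm

lemma injective_comp_reflectFinPerm :
    Function.Injective fun x : Fin n → ℝ => x ∘ reflectFinPerm x := by
  intro x y (hxy : x ∘ reflectFinPerm x = y ∘ reflectFinPerm y)
  have hσ : lastNonpos n (walk x) = lastNonpos n (walk y) := by
    rw [← lastNonpos_walk_comp_reflectFinPerm x, hxy, lastNonpos_walk_comp_reflectFinPerm]
  have hperm : reflectFinPerm x = reflectFinPerm y :=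
    Equiv.ext fun j => Fin.ext (by simp [reflectFinPerm, hσ])
  rw [hperm] at hxy
  exact (reflectFinPerm y).surjective.injective_comp_right hxy

lemma injective_comp_mergeFinPerm :
    Function.Injective fun x : Fin n → ℝ => x ∘ mergeFinPerm x := by
  intro x y (hxy : x ∘ mergeFinPerm x = y ∘ mergeFinPerm y)
  have hσ : lastNonpos n (walk x) = lastNonpos n (walk y) := by
    rw [← lastNonpos_walk_comp_mergeFinPerm x, hxy, lastNonpos_walk_comp_mergeFinPerm]
  have hcomp := congrArg extendByZero hxy
  simp only [mergeFinPerm, extendByZero_comp_finPerm, hσ] at hcomp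
  refine extendByZero_injective (funext fun j => ?_)
  rcases Nat.lt_or_ge j (lastNonpos n (walk y)) with hj | hj
  · exact eq_of_comp_mergePerm_eq hcomp j hj
  · simpa only [Function.comp_apply, mergePerm_of_le hj] using congrFun hcomp j

lemma measurableSet_reflectFinPerm_eq (p : Perm (Fin n)) :
    MeasurableSet {x | reflectFinPerm x = p} :=
  measurableSet_preimage_of_sameOrder (fun x y h => Equiv.ext fun j => Fin.ext (by
    simp [reflectFinPerm, lastNonpos_congr h (walk_zero x) (walk_zero y)])) {p}

lemma measurableSet_mergeFinPerm_eq (p : Perm (Fin n)) :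
    MeasurableSet {x | mergeFinPerm x = p} := by
  refine measurableSet_preimage_of_sameOrder (fun x y h => Equiv.ext fun j => Fin.ext ?_) {p}
  have hσ := lastNonpos_congr h (walk_zero x) (walk_zero y)
  simp only [mergeFinPerm, coe_finPerm_apply, hσ]
  rw [mergePerm_congr (q := fun i => 0 ≤ walk y i) fun i _ hi => ?_]
  simpa only [walk_zero] using h 0 (Nat.zero_le n) i (hi.trans (lastNonpos_walk_le y))

end Rearrangements

lemma map_eq_map_of_measurePreserving {α : Type*} [MeasurableSpace α] {γ : Measure α}
    {Φ : α → α} (hΦ : MeasurePreserving Φ γ γ) {f g : α → ℕ} (hf : Measurable f)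
    (hg : ∀ x, g x = f (Φ x)) : γ.map g = γ.map f := by
  rw [show g = f ∘ Φ from funext hg, ← Measure.map_map hf hΦ.measurable, hΦ.map_eq]

section Distribution

variable {n : ℕ} (ν : Measure ℝ) [IsFiniteMeasure ν]

lemma measurable_nPlus : Measurable fun x : Fin n → ℝ => nPlus n (walk x) := fun B _ =>
  measurableSet_preimage_of_sameOrder (fun x y h => nPlus_congr h (walk_zero x) (walk_zero y)) B

lemma measurable_nTildeMinus : Measurable fun x : Fin n → ℝ => nTildeMinus n (walk x) :=
  fun B _ => measurableSet_preimage_of_sameOrder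
    (fun x y h => nTildeMinus_congr h (walk_zero x) (walk_zero y)) B

lemma measurable_timeSinceMin : Measurable fun x : Fin n → ℝ => timeSinceMin n (walk x) :=
  fun B _ => measurableSet_preimage_of_sameOrder
    (fun x y h => timeSinceMin_congr h (walk_zero x) (walk_zero y)) B

lemma measurable_timeOfMax : Measurable fun x : Fin n → ℝ => timeOfMax n (walk x) :=
  fun B _ => measurableSet_preimage_of_sameOrder
    (fun x y h => timeOfMax_congr h (walk_zero x) (walk_zero y)) B

lemma measurePreserving_comp_reflectFinPerm :
    MeasurePreserving (fun x : Fin n → ℝ => x ∘ reflectFinPerm x)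
      (Measure.pi fun _ => ν) (Measure.pi fun _ => ν) :=
  measurePreserving_comp_perm ν _ measurableSet_reflectFinPerm_eq injective_comp_reflectFinPerm

lemma measurePreserving_comp_mergeFinPerm :
    MeasurePreserving (fun x : Fin n → ℝ => x ∘ mergeFinPerm x)
      (Measure.pi fun _ => ν) (Measure.pi fun _ => ν) :=
  measurePreserving_comp_perm ν _ measurableSet_mergeFinPerm_eq injective_comp_mergeFinPerm

theorem map_nTildeMinus_eq_map_nPlus :
    (Measure.pi fun _ : Fin n => ν).map (fun x => nTildeMinus n (walk x)) =
      (Measure.pi fun _ : Fin n => ν).map (fun x => nPlus n (walk x)) :=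
  map_eq_map_of_measurePreserving (measurePreserving_comp_reflectFinPerm ν) measurable_nPlus
    nTildeMinus_eq_nPlus_reflectFinPerm

theorem map_timeSinceMin_eq_map_timeOfMax :
    (Measure.pi fun _ : Fin n => ν).map (fun x => timeSinceMin n (walk x)) =
      (Measure.pi fun _ : Fin n => ν).map (fun x => timeOfMax n (walk x)) :=
  map_eq_map_of_measurePreserving (measurePreserving_comp_reflectFinPerm ν) measurable_timeOfMax
    timeSinceMin_eq_timeOfMax_reflectFinPerm

theorem map_nPlus_eq_map_timeOfMax :
    (Measure.pi fun _ : Fin n => ν).map (fun x => nPlus n (walk x)) =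
      (Measure.pi fun _ : Fin n => ν).map (fun x => timeOfMax n (walk x)) :=
  map_eq_map_of_measurePreserving (measurePreserving_comp_mergeFinPerm ν) measurable_timeOfMax
    nPlus_eq_timeOfMax_mergeFinPerm

end Distribution

lemma map_fun_eq_pi {Ω : Type*} [MeasurableSpace Ω] {μ : Measure Ω} [IsProbabilityMeasure μ]
    {ζ : ℕ → Ω → ℝ} (hmeas : ∀ i, Measurable (ζ i)) (hindep : iIndepFun ζ μ)
    (hident : ∀ i, μ.map (ζ i) = μ.map (ζ 0)) (n : ℕ) :
    μ.map (fun ω (i : Fin n) => ζ i ω) = Measure.pi fun _ => μ.map (ζ 0) := by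
  rw [(iIndepFun_iff_map_fun_eq_pi_map fun (i : Fin n) => (hmeas i).aemeasurable).1
    (hindep.precomp Fin.val_injective)]
  exact congrArg Measure.pi (funext fun i => hident i)

end RandomWalk

open RandomWalk

/-- The four random variables N⁺, Ñ⁻, ←F and →G all have the same distribution. -/
theorem stmt_10 {Ω : Type*} [MeasurableSpace Ω] (μ : Measure Ω) [IsProbabilityMeasure μ]
    (n : ℕ) (ζ : ℕ → Ω → ℝ)
    (hmeas : ∀ i, Measurable (ζ i))
    (hindep : ProbabilityTheory.iIndepFun ζ μ)
    (hident : ∀ i, μ.map (ζ i) = μ.map (ζ 0))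
    (S : ℕ → Ω → ℝ) (hS : ∀ i ω, S i ω = ∑ j ∈ Finset.range i, ζ j ω)
    (σ : Ω → ℕ) (hσ : ∀ ω, σ ω = sSup {i | i ≤ n ∧ S i ω ≤ 0})
    (Nplus Ntildeminus F' G : Ω → ℕ)
    (hNplus : ∀ ω, Nplus ω = ∑ i ∈ Finset.Icc 1 (σ ω), if 0 ≤ S i ω then 1 else 0)
    (hNtildeminus : ∀ ω, Ntildeminus ω =
      ∑ i ∈ Finset.range (σ ω), if S i ω ≤ S (σ ω) ω then 1 else 0)
    (hF' : ∀ ω, F' ω =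
      σ ω - sInf {i | i ≤ σ ω ∧ S i ω = sInf ((fun j => S j ω) '' Set.Iic (σ ω))})
    (hG : ∀ ω, G ω = sSup {i | i ≤ σ ω ∧ S i ω = sSup ((fun j => S j ω) '' Set.Iic (σ ω))}) :
    μ.map Nplus = μ.map Ntildeminus ∧ μ.map Nplus = μ.map F' ∧ μ.map Nplus = μ.map G := by
  set ν := μ.map (ζ 0)
  have : IsProbabilityMeasure ν := Measure.isProbabilityMeasure_map (hmeas 0).aemeasurable
  set V : Ω → Fin n → ℝ := fun ω i => ζ i ω
  have hlaw {f : (Fin n → ℝ) → ℕ} (hf : Measurable f) :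
      μ.map (fun ω => f (V ω)) = (Measure.pi fun _ => ν).map f := by
    rw [← map_fun_eq_pi hmeas hindep hident, Measure.map_map hf
      (measurable_pi_lambda _ fun i => hmeas i)]
    rfl
  have hS0 (ω : Ω) : S 0 ω = 0 := by simp [hS]
  have hwalk (ω : Ω) : SameOrder n (fun i => S i ω) (walk (V ω)) :=
    .of_eqOn fun i hi => (hS i ω).trans (sum_congr rfl fun j hj => by
      simp [extendByZero, V, show j < n by simp at hj; omega])
  have hNplus' : Nplus = fun ω => nPlus n (walk (V ω)) := funext fun ω =>
    (hNplus ω).trans (by rw [hσ]; exact nPlus_congr (hwalk ω) (hS0 ω) (walk_zero _))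
  have hNtildeminus' : Ntildeminus = fun ω => nTildeMinus n (walk (V ω)) := funext fun ω =>
    (hNtildeminus ω).trans (by rw [hσ]; exact nTildeMinus_congr (hwalk ω) (hS0 ω) (walk_zero _))
  have hF'' : F' = fun ω => timeSinceMin n (walk (V ω)) := funext fun ω =>
    (hF' ω).trans (by rw [hσ]; exact timeSinceMin_congr (hwalk ω) (hS0 ω) (walk_zero _))
  have hG' : G = fun ω => timeOfMax n (walk (V ω)) := funext fun ω =>
    (hG ω).trans (by rw [hσ]; exact timeOfMax_congr (hwalk ω) (hS0 ω) (walk_zero _))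
  rw [hNplus', hNtildeminus', hF'', hG', hlaw measurable_nPlus, hlaw measurable_nTildeMinus,
    hlaw measurable_timeSinceMin, hlaw measurable_timeOfMax, map_nTildeMinus_eq_map_nPlus,
    map_timeSinceMin_eq_map_timeOfMax, map_nPlus_eq_map_timeOfMax]
  exact ⟨rfl, rfl, rfl⟩
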